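/- arXiv:0907.3698 — 8 statements merged into one kernel-verified Lean document; each statement's English description precedes it below -/
import Mathlib

section
/- For integers a, b, i with a > 2b > 0, a + b = 2^i + 2^{i-1}, write a = 2^i + c and b = 2^{i-1} - c with 0 < c < 2^{i-1}. Then the binomial coefficient C(a-b, 2^i - b) = C(2^{i-1} + 2c, c) is even. -/
/-!
Write `c = 2^t c'` with `c'` odd. Since `c < 2^j`, we have `t + 1 ≤ j`, so `c` and `2^j + c` both
end in the binary block `1 0…0` of length `t + 1`. Adding them carries out of position `t`, and by
Kummer's theorem `C(2^j + 2c, c)` is even.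
-/

theorem Nat.Prime.dvd_choose_add_of_pow_le_mod_add_mod {p n k i : ℕ} (hp : p.Prime) (hi : 1 ≤ i)
    (hcarry : p ^ i ≤ k % p ^ i + n % p ^ i) : p ∣ choose (n + k) k := by
  have : Fact p.Prime := ⟨hp⟩
  have hlog : i < Nat.log p (n + k) + 1 := by
    refine Nat.lt_succ_of_le (Nat.le_log_of_pow_le hp.one_lt ?_)
    have := Nat.mod_le k (p ^ i)
    have := Nat.mod_le n (p ^ i)
    omega
  apply dvd_of_one_le_padicValNat
  rw [padicValNat_choose' (Nat.lt_succ_self _), Finset.one_le_card]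
  exact ⟨i, Finset.mem_filter.mpr ⟨Finset.mem_Ico.mpr ⟨hi, hlog⟩, hcarry⟩⟩

theorem Nat.mod_two_pow_padicValNat_succ {c : ℕ} (hc : c ≠ 0) :
    c % 2 ^ (padicValNat 2 c + 1) = 2 ^ padicValNat 2 c := by
  have hdvd : 2 ^ padicValNat 2 c ∣ c := pow_padicValNat_dvd
  have hndvd : ¬ 2 ^ (padicValNat 2 c + 1) ∣ c := pow_succ_padicValNat_not_dvd hc
  generalize padicValNat 2 c = v at hdvd hndvd ⊢
  obtain ⟨q, rfl⟩ := hdvd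
  have hq_odd : q % 2 = 1 := by
    rw [pow_succ] at hndvd
    have : ¬ 2 ∣ q := fun h => hndvd (Nat.mul_dvd_mul_left _ h)
    omega
  rw [pow_succ, Nat.mul_mod_mul_left, hq_odd, mul_one]

theorem two_dvd_choose_two_pow_add_add {c j : ℕ} (hc : c ≠ 0) (hcj : c < 2 ^ j) :
    2 ∣ Nat.choose (2 ^ j + c + c) c := by
  set t := padicValNat 2 c
  have hct : c % 2 ^ (t + 1) = 2 ^ t := Nat.mod_two_pow_padicValNat_succ hc
  have htj : t + 1 ≤ j := by
    have h2t : 2 ^ t < 2 ^ j :=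
      (Nat.le_of_dvd (Nat.pos_of_ne_zero hc) pow_padicValNat_dvd).trans_lt hcj
    exact (Nat.pow_lt_pow_iff_right (by norm_num)).mp h2t
  have hPc : (2 ^ j + c) % 2 ^ (t + 1) = 2 ^ t := by
    rw [Nat.add_mod, Nat.mod_eq_zero_of_dvd (Nat.pow_dvd_pow 2 htj), zero_add, Nat.mod_mod, hct]
  refine Nat.prime_two.dvd_choose_add_of_pow_le_mod_add_mod (i := t + 1) (by omega) ?_
  rw [hct, hPc, pow_succ]
  omega

theorem stmt0_general (a b i : ℕ) (hb : 0 < b) (hab : 2 * b < a)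
    (hsum : a + b = 2 ^ i + 2 ^ (i - 1)) :
    2 ∣ Nat.choose (a - b) (2 ^ i - b) := by
  obtain _ | j := i
  · norm_num at hsum
    omega
  rw [add_tsub_cancel_right, pow_succ] at hsum
  rw [pow_succ]
  set c := a - 2 * 2 ^ j
  have hn : a - b = 2 ^ j + c + c := by omega
  have hk : 2 ^ j * 2 - b = 2 ^ j + c := by omega
  rw [hn, hk, Nat.choose_symm_add]
  exact two_dvd_choose_two_pow_add_add (by omega) (by omega)

/-- For integers `a, b, i` with `a > 2b > 0` and `a + b = 2^i + 2^(i-1)`,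
the binomial coefficient `C(a - b, 2^i - b)` is even. -/
theorem stmt0 (a b i : ℕ) (hb : 0 < b) (hab : 2 * b < a) (hi : 1 ≤ i)
    (hsum : a + b = 2 ^ i + 2 ^ (i - 1)) :
    2 ∣ Nat.choose (a - b) (2 ^ i - b) :=
  stmt0_general a b i hb hab hsum
end

section
/- The polynomial e_2 · ω_1^{a-2b} ω_2^b = (x_2^{a-2b} + (x_1+x_2)^{a-2b}) x_1^b x_2^b (x_1+x_2)^b in F_2[x_1,x_2], where a > 2b > 0 and a + b = 2^i + 2^{i-1}, has zero coefficient on the monomial x_1^{2^i} x_2^{2^{i-1}}. -/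
/-!
Write `N = 2^(i-1)` and `c = a - 2b`, so that `c + 3b = 3N` and `0 < b < N`. The polynomial is
`x₁^b x₂^(b+c) (x₁+x₂)^b + x₁^b x₂^b (x₁+x₂)^(b+c)`. The first summand has `x₂`-degree at least
`b + c > N`, so it misses `x₁^(2N) x₂^N`; in the second the coefficient is `C(N + 2d, N + d)` with
`d = N - b ∈ (0, N)`, which is even: by Lucas' theorem one may divide by the `2`-part of `d`, after
which the top is even and the bottom odd.
-/

open MvPolynomial

theorem Nat.two_dvd_choose_of_even_of_odd {n k : ℕ} (hn : Even n) (hk : Odd k) :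
    2 ∣ n.choose k := by
  have lucas := Choose.choose_modEq_choose_mod_mul_choose_div_nat (p := 2) (n := n) (k := k)
  rw [Nat.even_iff.mp hn, Nat.odd_iff.mp hk, Nat.choose_zero_succ, zero_mul] at lucas
  exact Nat.modEq_zero_iff_dvd.mp lucas

theorem Nat.two_dvd_choose_add_two_mul {n d m : ℕ} (hd : 0 < d) (hdm : d < 2 ^ m)
    (hn : 2 ^ m ∣ n) : 2 ∣ (n + 2 * d).choose (n + d) := by
  obtain ⟨j, o, ho, rfl⟩ := Nat.exists_eq_two_pow_mul_odd hd.ne'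
  obtain ⟨q, rfl⟩ := hn
  have hjm : j < m := (Nat.pow_lt_pow_iff_right (by norm_num)).mp
    ((Nat.le_mul_of_pos_right _ ho.pos).trans_lt hdm)
  obtain ⟨e, rfl⟩ := Nat.exists_eq_add_of_lt hjm
  have htop : 2 ^ (j + e + 1) * q + 2 * (2 ^ j * o) = 2 ^ j * (2 ^ (e + 1) * q + 2 * o) := by
    ring
  have hbot : 2 ^ (j + e + 1) * q + 2 ^ j * o = 2 ^ j * (2 ^ (e + 1) * q + o) := by ring
  rw [htop, hbot, (Choose.choose_pow_mul_pow_mul_modEq_choose_nat).dvd_iff dvd_rfl]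
  have hq : Even (2 ^ (e + 1) * q) := (Nat.even_pow.mpr ⟨even_two, e.succ_ne_zero⟩).mul_right q
  exact Nat.two_dvd_choose_of_even_of_odd (hq.add (even_two_mul o)) (hq.add_odd ho)

theorem MvPolynomial.coeff_X_pow_mul_X_pow_mul_add_pow {R : Type*} [CommSemiring R]
    (d : Fin 2 →₀ ℕ) (p q r : ℕ) :
    coeff d (X 0 ^ p * X 1 ^ q * (X 0 + X 1) ^ r : MvPolynomial (Fin 2) R) =
      if p ≤ d 0 ∧ q ≤ d 1 ∧ d 0 + d 1 = p + q + r then (r.choose (d 0 - p) : R) else 0 := by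
  have hmon : (X 0 ^ p * X 1 ^ q : MvPolynomial (Fin 2) R) =
      monomial (Finsupp.single 0 p + Finsupp.single 1 q) 1 := by
    simp [X_pow_eq_monomial, monomial_mul]
  rw [hmon, coeff_monomial_mul', coeff_add_pow, one_mul]
  simp only [Finsupp.le_def, Fin.forall_fin_two, Finsupp.tsub_apply, Finsupp.add_apply,
    Finsupp.single_apply, Finset.HasAntidiagonal.mem_antidiagonal, Fin.isValue, one_ne_zero,
    zero_ne_one, if_true, if_false, add_zero, zero_add]
  split_ifs <;> first | rfl | omega | simp

/-- In `F₂[x₁,x₂]`, the polynomial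
`(x₂^(a-2b) + (x₁+x₂)^(a-2b)) · x₁^b x₂^b (x₁+x₂)^b`, where `a > 2b > 0` and
`a + b = 2^i + 2^(i-1)`, has zero coefficient on the monomial `x₁^(2^i) x₂^(2^(i-1))`. -/
theorem stmt1 (a b i : ℕ) (hb : 0 < b) (hab : 2 * b < a) (hi : 1 ≤ i)
    (hsum : a + b = 2 ^ i + 2 ^ (i - 1)) :
    MvPolynomial.coeff
      (Finsupp.single (0 : Fin 2) (2 ^ i) + Finsupp.single (1 : Fin 2) (2 ^ (i - 1)))
      (((X 1 ^ (a - 2 * b) + (X 0 + X 1) ^ (a - 2 * b)) *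
        (X 0 ^ b * X 1 ^ b * (X 0 + X 1) ^ b)) : MvPolynomial (Fin 2) (ZMod 2)) = 0 := by
  obtain ⟨N, hN⟩ : ∃ N, 2 ^ (i - 1) = N := ⟨_, rfl⟩
  have h2N : 2 ^ i = 2 * N := by rw [← hN, ← pow_succ', Nat.sub_add_cancel hi]
  obtain ⟨c, hc⟩ : ∃ c, a - 2 * b = c := ⟨_, rfl⟩
  rw [hN, h2N] at hsum
  have split_sum : ((X 1 ^ c + (X 0 + X 1) ^ c) * (X 0 ^ b * X 1 ^ b * (X 0 + X 1) ^ b) :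
        MvPolynomial (Fin 2) (ZMod 2)) =
      X 0 ^ b * X 1 ^ (b + c) * (X 0 + X 1) ^ b + X 0 ^ b * X 1 ^ b * (X 0 + X 1) ^ (b + c) := by
    ring
  have hchoose : 2 ∣ (N + 2 * (N - b)).choose (N + (N - b)) :=
    Nat.two_dvd_choose_add_two_mul (m := i - 1) (by omega) (by omega) (by rw [hN])
  rw [hN, hc, split_sum, coeff_add, coeff_X_pow_mul_X_pow_mul_add_pow,
    coeff_X_pow_mul_X_pow_mul_add_pow]
  simp only [Finsupp.add_apply, Finsupp.single_apply, Fin.isValue, one_ne_zero, zero_ne_one,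
    if_true, if_false, add_zero, zero_add, h2N]
  rw [if_neg (by omega), if_pos (by omega),
    show b + c = N + 2 * (N - b) by omega, show 2 * N - b = N + (N - b) by omega,
    (ZMod.natCast_eq_zero_iff _ 2).mpr hchoose, zero_add]
end

section
/- Let Ω_n denote the set of integer sequences (i_1,...,i_n) with 0 < i_1 ≤ 2 i_2, i_2 ≤ 2 i_3, ..., i_{n-1} ≤ 2 i_n, and i_n = 1. Then the map sending a monomial t_0^{α_0} ··· t_{n-1}^{α_{n-1}} with Σ_h α_h 2^h = 2^n - 1 to the sequence (i_1,...,i_n) defined by i_1 = (α_0+1)/2, i_{k+1} = (α_k + i_k)/2, is a bijection between the set of tuples (α_0,...,α_{n-1}) of nonnegative integers with Σ α_h 2^h = 2^n - 1 and Ω_n; moreover it sends total degree α_0+...+α_{n-1} to i_1+...+i_n. -/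
/-- Inverse map for `stmt4`: `α_0 = 2 i_1 - 1`, `α_k = 2 i_{k+1} - i_k`. -/
def GinvAux (n : ℕ) (i : ℕ → ℕ) : ℕ → ℕ :=
  fun k => if k = 0 then 2 * i 0 - 1 else if k < n then 2 * i k - i (k - 1) else 0

/-- The map `α ↦ i` with `i_k = (Σ_{h ≤ k-1} α_h 2^h + 1) / 2^k` (equivalently
`i_1 = (α_0+1)/2`, `i_{k+1} = (α_k + i_k)/2`) is a bijection between the set of tuples
`(α_0, …, α_{n-1})` of nonnegative integers with `Σ α_h 2^h = 2^n - 1` and the Minc set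
`Ω_n = {(i_1, …, i_n) : 0 < i_1 ≤ 2i_2 ≤ ⋯ ≤ 2^{n-1} i_n = 2^{n-1}}`; moreover it sends
the total degree `α_0 + ⋯ + α_{n-1}` to `i_1 + ⋯ + i_n`. -/
theorem stmt4 (n : ℕ) (hn : 1 ≤ n) (F : (ℕ → ℕ) → (ℕ → ℕ))
    (hF : ∀ α k, F α k =
      if k < n then (∑ h ∈ Finset.range (k + 1), α h * 2 ^ h + 1) / 2 ^ (k + 1) else 0) :
    Set.BijOn F
      {α : ℕ → ℕ | (∀ h, n ≤ h → α h = 0) ∧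
        ∑ h ∈ Finset.range n, α h * 2 ^ h = 2 ^ n - 1}
      {i : ℕ → ℕ | (∀ k, n ≤ k → i k = 0) ∧ 0 < i 0 ∧
        (∀ k, k + 1 < n → i k ≤ 2 * i (k + 1)) ∧ i (n - 1) = 1}
    ∧ ∀ α ∈ {α : ℕ → ℕ | (∀ h, n ≤ h → α h = 0) ∧
        ∑ h ∈ Finset.range n, α h * 2 ^ h = 2 ^ n - 1},
        ∑ k ∈ Finset.range n, F α k = ∑ h ∈ Finset.range n, α h := by
  have hpow : ∀ k : ℕ, 0 < 2 ^ k := fun k => pow_pos (by norm_num) k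
  -- key divisibility
  have hdvd : ∀ α : ℕ → ℕ, (∑ h ∈ Finset.range n, α h * 2 ^ h = 2 ^ n - 1) →
      ∀ k, k < n → 2 ^ (k + 1) ∣ (∑ h ∈ Finset.range (k + 1), α h * 2 ^ h + 1) := by
    intro α hsum k hk
    have hsplit : (∑ h ∈ Finset.range (k + 1), α h * 2 ^ h)
        + ∑ h ∈ Finset.Ico (k + 1) n, α h * 2 ^ h = ∑ h ∈ Finset.range n, α h * 2 ^ h :=
      Finset.sum_range_add_sum_Ico _ (by omega)
    have hT : 2 ^ (k + 1) ∣ ∑ h ∈ Finset.Ico (k + 1) n, α h * 2 ^ h := by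
      refine Finset.dvd_sum fun h hh => ?_
      rw [Finset.mem_Ico] at hh
      exact Dvd.dvd.mul_left (pow_dvd_pow 2 hh.1) _
    have h2n : 2 ^ (k + 1) ∣ 2 ^ n := pow_dvd_pow 2 (by omega)
    have hpos : 0 < 2 ^ n := hpow n
    have heq : (∑ h ∈ Finset.range (k + 1), α h * 2 ^ h + 1)
        = 2 ^ n - ∑ h ∈ Finset.Ico (k + 1) n, α h * 2 ^ h := by omega
    rw [heq]; exact Nat.dvd_sub h2n hT
  -- key identity
  have hkey : ∀ α : ℕ → ℕ, (∑ h ∈ Finset.range n, α h * 2 ^ h = 2 ^ n - 1) →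
      ∀ k, k < n → F α k * 2 ^ (k + 1) = ∑ h ∈ Finset.range (k + 1), α h * 2 ^ h + 1 := by
    intro α hsum k hk
    rw [hF, if_pos hk, Nat.div_mul_cancel (hdvd α hsum k hk)]
  -- recurrences
  have hrec0 : ∀ α : ℕ → ℕ, (∑ h ∈ Finset.range n, α h * 2 ^ h = 2 ^ n - 1) →
      2 * F α 0 = α 0 + 1 := by
    intro α hsum
    have h := hkey α hsum 0 (by omega)
    simp [Finset.sum_range_one] at h
    omega
  have hrec : ∀ α : ℕ → ℕ, (∑ h ∈ Finset.range n, α h * 2 ^ h = 2 ^ n - 1) →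
      ∀ k, k + 1 < n → 2 * F α (k + 1) = α (k + 1) + F α k := by
    intro α hsum k hk
    have h1 := hkey α hsum k (by omega)
    have h2 := hkey α hsum (k + 1) hk
    have h3 : ∑ h ∈ Finset.range (k + 1 + 1), α h * 2 ^ h
        = ∑ h ∈ Finset.range (k + 1), α h * 2 ^ h + α (k + 1) * 2 ^ (k + 1) :=
      Finset.sum_range_succ _ _
    refine Nat.eq_of_mul_eq_mul_right (hpow (k + 1)) ?_
    calc 2 * F α (k + 1) * 2 ^ (k + 1) = F α (k + 1) * 2 ^ (k + 1 + 1) := by ring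
      _ = ∑ h ∈ Finset.range (k + 1 + 1), α h * 2 ^ h + 1 := h2
      _ = (∑ h ∈ Finset.range (k + 1), α h * 2 ^ h + 1) + α (k + 1) * 2 ^ (k + 1) := by
          rw [h3]; ring
      _ = F α k * 2 ^ (k + 1) + α (k + 1) * 2 ^ (k + 1) := by rw [h1]
      _ = (α (k + 1) + F α k) * 2 ^ (k + 1) := by ring
  have hlast : ∀ α : ℕ → ℕ, (∑ h ∈ Finset.range n, α h * 2 ^ h = 2 ^ n - 1) →
      F α (n - 1) = 1 := by
    intro α hsum
    have h := hkey α hsum (n - 1) (by omega)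
    rw [show n - 1 + 1 = n from by omega, hsum] at h
    have hpos := hpow n
    have h2 : F α (n - 1) * 2 ^ n = 2 ^ n := by omega
    exact Nat.eq_of_mul_eq_mul_right hpos (h2.trans (one_mul _).symm)
  have hposF : ∀ α : ℕ → ℕ, (∑ h ∈ Finset.range n, α h * 2 ^ h = 2 ^ n - 1) →
      ∀ k, k < n → 0 < F α k := by
    intro α hsum k hk
    have h := hkey α hsum k hk
    rcases Nat.eq_zero_or_pos (F α k) with h0 | h0
    · rw [h0, zero_mul] at h; omega
    · exact h0
  -- key identity for the inverse map
  have hGkey : ∀ i : ℕ → ℕ, 0 < i 0 → (∀ k, k + 1 < n → i k ≤ 2 * i (k + 1)) →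
      ∀ k, k < n →
      ∑ h ∈ Finset.range (k + 1), GinvAux n i h * 2 ^ h + 1 = i k * 2 ^ (k + 1) := by
    intro i hi0 hile k
    induction k with
    | zero =>
      intro _
      simp [GinvAux, Finset.sum_range_one]
      omega
    | succ k ih =>
      intro hk
      have h1 := ih (by omega)
      have hα : GinvAux n i (k + 1) = 2 * i (k + 1) - i k := by
        simp only [GinvAux]
        rw [if_neg (by omega), if_pos hk]
        simp
      rw [Finset.sum_range_succ, hα]
      have hle := hile k hk
      calc (∑ h ∈ Finset.range (k + 1), GinvAux n i h * 2 ^ h)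
              + (2 * i (k + 1) - i k) * 2 ^ (k + 1) + 1
          = (∑ h ∈ Finset.range (k + 1), GinvAux n i h * 2 ^ h + 1)
              + (2 * i (k + 1) - i k) * 2 ^ (k + 1) := by ring
        _ = i k * 2 ^ (k + 1) + (2 * i (k + 1) - i k) * 2 ^ (k + 1) := by rw [h1]
        _ = (i k + (2 * i (k + 1) - i k)) * 2 ^ (k + 1) := by ring
        _ = (2 * i (k + 1)) * 2 ^ (k + 1) := by
            rw [show i k + (2 * i (k + 1) - i k) = 2 * i (k + 1) from by omega]
        _ = i (k + 1) * 2 ^ (k + 1 + 1) := by ring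
  constructor
  · refine ⟨?_, ?_, ?_⟩
    · -- MapsTo
      rintro α ⟨hα0, hsum⟩
      refine ⟨?_, ?_, ?_, ?_⟩
      · intro k hk; rw [hF, if_neg (by omega)]
      · exact hposF α hsum 0 (by omega)
      · intro k hk
        have := hrec α hsum k hk
        omega
      · exact hlast α hsum
    · -- InjOn
      rintro α ⟨hα0, hαsum⟩ β ⟨hβ0, hβsum⟩ hFeq
      have hsums : ∀ k, k < n → ∑ h ∈ Finset.range (k + 1), α h * 2 ^ h
          = ∑ h ∈ Finset.range (k + 1), β h * 2 ^ h := by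
        intro k hk
        have h1 := hkey α hαsum k hk
        have h2 := hkey β hβsum k hk
        rw [hFeq] at h1
        omega
      funext h
      rcases lt_or_ge h n with hh | hh
      · match h, hh with
        | 0, hh =>
          have h0 := hsums 0 hh
          simpa [Finset.sum_range_one] using h0
        | (m + 1), hh =>
          have e1 := hsums m (by omega)
          have e2 := hsums (m + 1) hh
          rw [Finset.sum_range_succ _ (m + 1), Finset.sum_range_succ _ (m + 1), e1] at e2
          exact Nat.eq_of_mul_eq_mul_right (hpow (m + 1)) (Nat.add_left_cancel e2)
      · rw [hα0 h hh, hβ0 h hh]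
    · -- SurjOn
      rintro i ⟨hi0, hipos, hile, hilast⟩
      set α := GinvAux n i with hαdef
      have hkeyG : ∀ k, k < n →
          ∑ h ∈ Finset.range (k + 1), α h * 2 ^ h + 1 = i k * 2 ^ (k + 1) :=
        hGkey i hipos hile
      have hsum : ∑ h ∈ Finset.range n, α h * 2 ^ h = 2 ^ n - 1 := by
        have h := hkeyG (n - 1) (by omega)
        rw [show n - 1 + 1 = n from by omega, hilast, one_mul] at h
        have := hpow n
        omega
      refine ⟨α, ⟨?_, hsum⟩, ?_⟩
      · intro h hh
        simp only [hαdef, GinvAux]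
        rw [if_neg (by omega), if_neg (by omega)]
      · funext k
        rcases lt_or_ge k n with hk | hk
        · rw [hF, if_pos hk, hkeyG k hk]
          exact Nat.mul_div_left (i k) (hpow (k + 1))
        · rw [hF, if_neg (by omega), hi0 k hk]
  · -- degree
    rintro α ⟨hα0, hsum⟩
    have hdeg : ∀ m, m < n → (∑ k ∈ Finset.range (m + 1), F α k) + F α m
        = (∑ h ∈ Finset.range (m + 1), α h) + 1 := by
      intro m
      induction m with
      | zero =>
        intro _
        simp only [Finset.sum_range_succ, Finset.sum_range_zero, zero_add]
        have := hrec0 α hsum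
        omega
      | succ m ih =>
        intro hm
        have h1 := ih (by omega)
        have h2 := hrec α hsum m hm
        rw [Finset.sum_range_succ (fun k => F α k), Finset.sum_range_succ α]
        omega
    have h := hdeg (n - 1) (by omega)
    rw [show n - 1 + 1 = n from by omega, hlast α hsum] at h
    omega
end

section
/- Let P be a nonzero homogeneous polynomial in F_2[x_1,...,x_n] and let m(P) be its lexicographically largest monomial. If m(P) = x_1^{i_1}···x_n^{i_n} is not admissible (i.e. there exists 1 < s ≤ n with 2 i_s > i_{s-1}), then there exists a matrix σ ∈ M_n(F_2) (acting by linear substitution of variables) such that m(σ·P) > m(P) in the lexicographic order. -/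
open MvPolynomial

/-!
Pick `i < j` with `m i < 2 * m j`. If some exponent `e` of `P` agreeing with `m` before `i`
has `e j > m i`, swapping `x_i` and `x_j` already produces a monomial beyond `m`.

Otherwise substitute `x_j ↦ x_i + x_j`. On the slice of `m` (exponents agreeing with `m`
outside `{i, j}` with the same `x_i x_j`-degree) the image of `P` is, up to a fixed monomial
factor, the homogenisation of `Q(t) = ∑ c_e t^(e i) (t + 1)^(e j)`, so its lex-largest monomial
there has `x_i`-exponent `deg Q`. Maximality of `m` gives `e j ≥ m j`, the case assumption
gives `e i ≥ m j`, hence `t^(m j) (t + 1)^(m j)` divides `Q ≠ 0` and `deg Q ≥ 2 m j > m i`.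
-/

/-- The left action of `M_n(F₂)` on `F₂[x₁,…,x_n]` by linear substitution:
`(σ·f)(x₁,…,x_n) = f(Σ_j σ_{j,1} x_j, …, Σ_j σ_{j,n} x_j)`. -/
noncomputable def matAct {n : ℕ} (σ : Matrix (Fin n) (Fin n) (ZMod 2))
    (f : MvPolynomial (Fin n) (ZMod 2)) : MvPolynomial (Fin n) (ZMod 2) :=
  MvPolynomial.aeval (fun i => ∑ j, MvPolynomial.C (σ j i) * MvPolynomial.X j) f

section Lex

variable {ι : Type*} [LinearOrder ι]

theorem Finsupp.apply_le_of_toLex_le {e m : ι →₀ ℕ} {i j : ι} (hij : i < j)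
    (hle : toLex e ≤ toLex m) (hoff : ∀ l, l ≠ i → l ≠ j → e l = m l) : e i ≤ m i := by
  obtain heq | hlt := hle.eq_or_lt
  · rw [toLex_inj.mp heq]
  obtain ⟨l, hbelow, hl⟩ := Finsupp.Lex.lt_iff.mp hlt
  rcases eq_or_ne l i with rfl | hli
  · exact hl.le
  rcases eq_or_ne l j with rfl | hlj
  · exact (hbelow i hij).le
  · exact absurd (hoff l hli hlj) hl.ne

theorem MvPolynomial.exists_toLex_max_support_gt {R : Type*} [CommSemiring R]
    (f : MvPolynomial ι R) {m μ : ι →₀ ℕ} (hμ : μ ∈ f.support) (h : toLex m < toLex μ) :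
    ∃ m' ∈ f.support, (∀ e ∈ f.support, toLex e ≤ toLex m') ∧ toLex m < toLex m' := by
  obtain ⟨m', hm', hmax⟩ := f.support.exists_max_image toLex ⟨μ, hμ⟩
  exact ⟨m', hm', hmax, h.trans_le (hmax μ hμ)⟩

end Lex

section Slice

variable {ι : Type*} (i j : ι)

/-- The substitution `x_j ↦ x_i + x_j` sends a monomial to a combination of monomials of its
own slice. -/
def SameSlice (e μ : ι →₀ ℕ) : Prop :=
  (∀ l, l ≠ i → l ≠ j → e l = μ l) ∧ e i + e j = μ i + μ j

variable {i j}

theorem SameSlice.refl (e : ι →₀ ℕ) : SameSlice i j e e :=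
  ⟨fun _ _ _ => rfl, rfl⟩

theorem SameSlice.symm {e μ : ι →₀ ℕ} (h : SameSlice i j e μ) : SameSlice i j μ e :=
  ⟨fun l hi hj => (h.1 l hi hj).symm, h.2.symm⟩

theorem SameSlice.trans {e μ ν : ι →₀ ℕ} (h : SameSlice i j e μ) (h' : SameSlice i j μ ν) :
    SameSlice i j e ν :=
  ⟨fun l hi hj => (h.1 l hi hj).trans (h'.1 l hi hj), h.2.trans h'.2⟩

theorem SameSlice.eq_of_apply_eq {e μ : ι →₀ ℕ} (h : SameSlice i j e μ) (hi : e i = μ i) :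
    e = μ := by
  classical
  ext l
  by_cases hli : l = i
  · rwa [hli]
  by_cases hlj : l = j
  · subst hlj; have := h.2; omega
  · exact h.1 l hli hlj

variable {R : Type*} [CommSemiring R]

open Classical in
/-- The slice of `m` in the image of `P` under `x_j ↦ x_i + x_j`, dehomogenised by
`x_i ↦ t`, `x_j ↦ 1`. -/
noncomputable def slicePoly (P : MvPolynomial ι R) (i j : ι) (m : ι →₀ ℕ) : Polynomial R :=
  ∑ e ∈ P.support with SameSlice i j e m,
    Polynomial.C (coeff e P) * (Polynomial.X ^ e i * (Polynomial.X + 1) ^ e j)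

variable {P : MvPolynomial ι R} {m : ι →₀ ℕ}

open Classical in
theorem coeff_slicePoly (d : ℕ) :
    (slicePoly P i j m).coeff d = ∑ e ∈ P.support with SameSlice i j e m,
      coeff e P * if e i ≤ d then ((e j).choose (d - e i) : R) else 0 := by
  rw [slicePoly, Polynomial.finsetSum_coeff]
  refine Finset.sum_congr rfl fun e _ => ?_
  rw [Polynomial.coeff_C_mul, Polynomial.coeff_X_pow_mul', Polynomial.coeff_X_add_one_pow]

theorem slicePoly_ne_zero (hm : m ∈ P.support) : slicePoly P i j m ≠ 0 := by
  classical
  obtain ⟨e₀, he₀, hmin⟩ := (P.support.filter (SameSlice i j · m)).exists_min_image (· i)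
    ⟨m, Finset.mem_filter.mpr ⟨hm, .refl m⟩⟩
  have hcoeff : (slicePoly P i j m).coeff (e₀ i) = coeff e₀ P := by
    rw [coeff_slicePoly, Finset.sum_eq_single_of_mem e₀ he₀ fun e he hne => ?_]
    · simp
    · rw [Finset.mem_filter] at he he₀
      rw [if_neg fun hle => hne <| (he.2.trans he₀.2.symm).eq_of_apply_eq
        (hle.antisymm (hmin e (Finset.mem_filter.mpr he))), mul_zero]
  intro h
  rw [h, Polynomial.coeff_zero, eq_comm] at hcoeff
  exact (mem_support_iff.mp (Finset.mem_filter.mp he₀).1) hcoeff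

theorem natDegree_slicePoly_le : (slicePoly P i j m).natDegree ≤ m i + m j := by
  classical
  refine Polynomial.natDegree_sum_le_of_forall_le _ _ fun e he => ?_
  rw [← (Finset.mem_filter.mp he).2.2]
  compute_degree

theorem two_mul_le_natDegree_slicePoly [Nontrivial R] {a : ℕ}
    (ha : ∀ e ∈ P.support, SameSlice i j e m → a ≤ e i ∧ a ≤ e j)
    (hne : slicePoly P i j m ≠ 0) : 2 * a ≤ (slicePoly P i j m).natDegree := by
  classical
  obtain ⟨H, hH⟩ : Polynomial.X ^ a * (Polynomial.X + 1) ^ a ∣ slicePoly P i j m := by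
    refine Finset.dvd_sum fun e he => Dvd.dvd.mul_left ?_ _
    obtain ⟨he, hslice⟩ := Finset.mem_filter.mp he
    exact mul_dvd_mul (pow_dvd_pow _ (ha e he hslice).1) (pow_dvd_pow _ (ha e he hslice).2)
  have hmonic : (Polynomial.X ^ a * (Polynomial.X + 1) ^ a : Polynomial R).Monic :=
    (Polynomial.monic_X_pow a).mul (by simpa using (Polynomial.monic_X_add_C (1 : R)).pow a)
  have hdeg : (Polynomial.X ^ a * (Polynomial.X + 1) ^ a : Polynomial R).natDegree = a + a := by
    compute_degree!
  rw [hH, hmonic.natDegree_mul' (right_ne_zero_of_mul (hH ▸ hne)), hdeg]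
  omega

end Slice

section Transvection

variable {ι R : Type*} [CommSemiring R] [DecidableEq ι] {i j : ι}

theorem aeval_update_X_monomial (e : ι →₀ ℕ) (c : R) :
    aeval (Function.update X j (X i + X j)) (monomial e c) =
      ∑ r ∈ Finset.range (e j + 1),
        monomial (e.erase j + Finsupp.single i r + Finsupp.single j (e j - r))
          (c * (e j).choose r) := by
  have hsplit : monomial e c = monomial (e.erase j) c * X j ^ e j := by
    rw [X_pow_eq_monomial, monomial_mul, mul_one, Finsupp.erase_add_single]
  have hrest : aeval (Function.update X j (X i + X j)) (monomial (e.erase j) c) =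
      monomial (e.erase j) c := by
    rw [aeval_monomial, monomial_eq, algebraMap_eq]
    congr 1
    refine Finsupp.prod_congr fun l hl => ?_
    rw [Function.update_of_ne (by rintro rfl; simp at hl)]
  rw [hsplit, map_mul, hrest, map_pow, aeval_X, Function.update_self, add_pow,
    Finset.mul_sum]
  refine Finset.sum_congr rfl fun r _ => ?_
  rw [X_pow_eq_monomial, X_pow_eq_monomial, ← C_eq_coe_nat, ← monomial_zero', monomial_mul,
    monomial_mul, monomial_mul, one_mul, add_zero, ← add_assoc, ← mul_assoc, mul_one]

open Classical in
theorem coeff_aeval_update_X_monomial (hij : i ≠ j) (e μ : ι →₀ ℕ) (c : R) :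
    coeff μ (aeval (Function.update X j (X i + X j)) (monomial e c)) =
      if SameSlice i j e μ ∧ e i ≤ μ i then c * (e j).choose (μ i - e i) else 0 := by
  have happly : ∀ r l, (e.erase j + Finsupp.single i r + Finsupp.single j (e j - r)) l =
      if l = i then e i + r else if l = j then e j - r else e l := by
    intro r l
    rcases eq_or_ne l i with rfl | hli
    · simp [hij]
    rcases eq_or_ne l j with rfl | hlj
    · simp [hli]
    · simp [hli, hlj]
  have key : ∀ r ∈ Finset.range (e j + 1),
      e.erase j + Finsupp.single i r + Finsupp.single j (e j - r) = μ ↔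
        (SameSlice i j e μ ∧ e i ≤ μ i) ∧ r = μ i - e i := by
    intro r hr
    have hr := Finset.mem_range.mp hr
    simp only [Finsupp.ext_iff, happly]
    constructor
    · intro h
      have hi := h i
      have hj := h j
      simp only [if_pos, if_neg hij.symm] at hi hj
      refine ⟨⟨⟨fun l hli hlj => ?_, by omega⟩, by omega⟩, by omega⟩
      simpa [hli, hlj] using h l
    · rintro ⟨⟨⟨hoff, hsum⟩, hle⟩, rfl⟩ l
      split_ifs with hli hlj
      · subst hli; omega
      · subst hlj; omega
      · exact hoff l hli hlj
  rw [aeval_update_X_monomial, coeff_sum]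
  simp only [coeff_monomial]
  split_ifs with hA
  · have hmem : μ i - e i ∈ Finset.range (e j + 1) := by
      have := hA.1.2; rw [Finset.mem_range]; omega
    rw [Finset.sum_eq_single_of_mem _ hmem fun r hr hne => if_neg fun h => hne ((key r hr).1 h).2,
      if_pos ((key _ hmem).2 ⟨hA, rfl⟩)]
  · exact Finset.sum_eq_zero fun r hr => if_neg fun h => hA ((key r hr).1 h).1

theorem coeff_aeval_update_X_eq_coeff_slicePoly {P : MvPolynomial ι R} {m : ι →₀ ℕ}
    (hij : i ≠ j) {μ : ι →₀ ℕ} (hμ : SameSlice i j μ m) :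
    coeff μ (aeval (Function.update X j (X i + X j)) P) = (slicePoly P i j m).coeff (μ i) := by
  classical
  conv_lhs => rw [P.as_sum]
  rw [map_sum, coeff_sum, coeff_slicePoly, Finset.sum_filter]
  refine Finset.sum_congr rfl fun e _ => ?_
  have hslice : SameSlice i j e μ ↔ SameSlice i j e m :=
    ⟨fun h => h.trans hμ, fun h => h.trans hμ.symm⟩
  rw [coeff_aeval_update_X_monomial hij]
  by_cases h1 : SameSlice i j e m <;> by_cases h2 : e i ≤ μ i <;> simp [h1, h2, hslice]

end Transvection

section Increase

variable {ι R : Type*} [LinearOrder ι] [CommSemiring R] {P : MvPolynomial ι R}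
  {m : ι →₀ ℕ} {i j : ι}

theorem exists_mem_support_rename_swap_toLex_gt {e : ι →₀ ℕ} (he : e ∈ P.support)
    (hij : i < j) (hlow : ∀ l < i, e l = m l) (hbig : m i < e j) :
    ∃ μ ∈ (rename (Equiv.swap i j) P).support, toLex m < toLex μ := by
  refine ⟨Finsupp.mapDomain (Equiv.swap i j) e, ?_, Finsupp.Lex.lt_iff.mpr ⟨i, fun l hl => ?_, ?_⟩⟩
  · rwa [mem_support_iff, coeff_rename_mapDomain _ (Equiv.injective _), ← mem_support_iff]
  · simp [Finsupp.mapDomain_equiv_apply, Equiv.swap_apply_of_ne_of_ne hl.ne (hl.trans hij).ne,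
      hlow l hl]
  · simpa [Finsupp.mapDomain_equiv_apply] using hbig

theorem exists_mem_support_aeval_update_X_toLex_gt [Nontrivial R] (hm : m ∈ P.support)
    (hmax : ∀ e ∈ P.support, toLex e ≤ toLex m) (hij : i < j)
    (hcase : ∀ e ∈ P.support, (∀ l < i, e l = m l) → e j ≤ m i) (hineq : m i < 2 * m j) :
    ∃ μ ∈ (aeval (Function.update (X : ι → MvPolynomial ι R) j (X i + X j)) P).support,
      toLex m < toLex μ := by
  classical
  set d := (slicePoly P i j m).natDegree
  have hbounds : ∀ e ∈ P.support, SameSlice i j e m → m j ≤ e i ∧ m j ≤ e j := by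
    intro e he hslice
    have hei : e i ≤ m i := Finsupp.apply_le_of_toLex_le hij (hmax e he) hslice.1
    have hej : e j ≤ m i := hcase e he fun l hl => hslice.1 l hl.ne (hl.trans hij).ne
    have := hslice.2
    omega
  have hgt : m i < d :=
    hineq.trans_le (two_mul_le_natDegree_slicePoly hbounds (slicePoly_ne_zero hm))
  have hle : d ≤ m i + m j := natDegree_slicePoly_le
  set μ := (m.update i d).update j (m i + m j - d)
  have hμi : μ i = d := by simp [μ, hij.ne]
  have hμ : SameSlice i j μ m :=
    ⟨fun l hli hlj => by simp [μ, hli, hlj], by rw [hμi]; simp [μ]; omega⟩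
  refine ⟨μ, ?_, Finsupp.Lex.lt_iff.mpr ⟨i, fun l hl => (hμ.1 l hl.ne (hl.trans hij).ne).symm, ?_⟩⟩
  · rw [mem_support_iff, coeff_aeval_update_X_eq_coeff_slicePoly hij.ne hμ, hμi]
    exact mt Polynomial.leadingCoeff_eq_zero.mp (slicePoly_ne_zero hm)
  · simpa [hμi] using hgt

end Increase

theorem matAct_permMatrix {n : ℕ} (g : Equiv.Perm (Fin n)) (P : MvPolynomial (Fin n) (ZMod 2)) :
    matAct (g.permMatrix (ZMod 2)) P = rename g.symm P := by
  rw [matAct, ← aeval_X_left_apply (rename _ P), aeval_rename]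
  congr 2
  funext b
  simp [PEquiv.toMatrix_apply, ← Equiv.eq_symm_apply]

theorem matAct_transvection {n : ℕ} (i j : Fin n) (P : MvPolynomial (Fin n) (ZMod 2)) :
    matAct (Matrix.transvection i j 1) P = aeval (Function.update X j (X i + X j)) P := by
  rw [matAct]
  congr 2
  funext b
  rcases eq_or_ne b j with rfl | hb
  · simp [Matrix.transvection, Matrix.one_apply, Matrix.single_apply, add_mul,
      Finset.sum_add_distrib, add_comm]
  · simp [Matrix.transvection, Matrix.one_apply, hb, hb.symm]

theorem exists_matAct_toLex_gt {n : ℕ} {P : MvPolynomial (Fin n) (ZMod 2)} {m : Fin n →₀ ℕ}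
    (hm : m ∈ P.support) (hmax : ∀ e ∈ P.support, toLex e ≤ toLex m) {i j : Fin n}
    (hij : i < j) (hineq : m i < 2 * m j) :
    ∃ σ : Matrix (Fin n) (Fin n) (ZMod 2), ∃ μ ∈ (matAct σ P).support, toLex m < toLex μ := by
  by_cases hcase : ∃ e ∈ P.support, (∀ l < i, e l = m l) ∧ m i < e j
  · obtain ⟨e, he, hlow, hbig⟩ := hcase
    refine ⟨(Equiv.swap i j).permMatrix (ZMod 2), ?_⟩
    rw [matAct_permMatrix, Equiv.symm_swap]
    exact exists_mem_support_rename_swap_toLex_gt he hij hlow hbig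
  · push Not at hcase
    refine ⟨Matrix.transvection i j 1, ?_⟩
    rw [matAct_transvection]
    exact exists_mem_support_aeval_update_X_toLex_gt hm hmax hij hcase hineq

theorem stmt6_general (n : ℕ) (P : MvPolynomial (Fin n) (ZMod 2)) (m : Fin n →₀ ℕ)
    (hmem : m ∈ P.support) (hmax : ∀ e ∈ P.support, toLex e ≤ toLex m)
    (hnadm : ∃ k : ℕ, ∃ h : k + 1 < n,
      m ⟨k, Nat.lt_of_succ_lt h⟩ < 2 * m ⟨k + 1, h⟩) :
    ∃ σ : Matrix (Fin n) (Fin n) (ZMod 2), ∃ m' ∈ (matAct σ P).support,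
      (∀ e ∈ (matAct σ P).support, toLex e ≤ toLex m') ∧ toLex m < toLex m' := by
  obtain ⟨k, hk, hineq⟩ := hnadm
  obtain ⟨σ, μ, hμ, hlt⟩ :=
    exists_matAct_toLex_gt hmem hmax (Fin.mk_lt_mk.mpr k.lt_succ_self) hineq
  exact ⟨σ, (matAct σ P).exists_toLex_max_support_gt hμ hlt⟩

/-- If the lexicographically largest monomial `m` of a nonzero homogeneous
`P ∈ F₂[x₁,…,x_n]` is not admissible (some `2 i_s > i_{s-1}`), then there is a matrix
`σ ∈ M_n(F₂)` with `m(σ·P) > m(P)` in the lexicographic order. -/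
theorem stmt6 (n : ℕ) (P : MvPolynomial (Fin n) (ZMod 2)) (hP : P ≠ 0)
    (hhom : ∃ d, P.IsHomogeneous d) (m : Fin n →₀ ℕ)
    (hmem : m ∈ P.support) (hmax : ∀ e ∈ P.support, toLex e ≤ toLex m)
    (hnadm : ∃ k : ℕ, ∃ h : k + 1 < n,
      m ⟨k, Nat.lt_of_succ_lt h⟩ < 2 * m ⟨k + 1, h⟩) :
    ∃ σ : Matrix (Fin n) (Fin n) (ZMod 2), ∃ m' ∈ (matAct σ P).support,
      (∀ e ∈ (matAct σ P).support, toLex e ≤ toLex m') ∧ toLex m < toLex m' :=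
  stmt6_general n P m hmem hmax hnadm
end

section
/- In F_2[x_1,x_2], if a polynomial Q of degree d is B-invariant for the Borel subgroup (i.e. invariant under x_2 ↦ x_1 + x_2) and is written Q = x_1^q x_2^q (x_1+x_2)^q Q' with q maximal, and Q' contains the monomial x_1^i for some i, then the lexicographically largest monomial of Q is x_1^{2q+i} x_2^q. -/
open MvPolynomial

/-!
Since `x₂^q` divides `Q`, every monomial of `Q` has `x₂`-exponent at least `q`, and as `Q` is
homogeneous, the lexicographic order on its monomials is the reverse of the order of their
`x₂`-exponents. So it suffices that `x₁^(2q+i) x₂^q` occurs in `Q`: modulo `x₂^(q+1)` the factor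
`(x₁ x₂ (x₁ + x₂))^q` is `x₁^(2q) x₂^q`, so that coefficient of `Q` is the coefficient of `x₁^i`
in `Q'`.
-/

namespace MvPolynomial

variable {σ R : Type*}

theorem le_of_monomial_one_dvd_of_mem_support [CommSemiring R] {s e : σ →₀ ℕ}
    {p : MvPolynomial σ R} (hdvd : monomial s 1 ∣ p) (he : e ∈ p.support) : s ≤ e := by
  by_contra hse
  apply mem_support_iff.mp he
  rw [← coeff_modMonomial_of_not_le p hse, monomial_one_dvd_iff_modMonomial_eq_zero.mp hdvd,
    coeff_zero]

theorem coeff_X_mul_X_mul_X_add_X_pow_mul [CommRing R] {s t : σ} (hst : s ≠ t) (q i : ℕ)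
    (g : MvPolynomial σ R) :
    coeff (Finsupp.single s (2 * q + i) + Finsupp.single t q)
      ((X s * X t * (X s + X t)) ^ q * g) = coeff (Finsupp.single s i) g := by
  obtain ⟨r, hr⟩ : X t ∣ (X s + X t) ^ q - X s ^ q := by
    have h := sub_dvd_pow_sub_pow (X s + X t : MvPolynomial σ R) (X s) q
    rwa [add_sub_cancel_left] at h
  have hsplit : (X s * X t * (X s + X t)) ^ q * g =
      monomial (Finsupp.single s (2 * q) + Finsupp.single t q) 1 * g +
        monomial (Finsupp.single t (q + 1)) 1 * (X s ^ q * r * g) := by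
    rw [← X_pow_eq_monomial, monomial_add_single, ← X_pow_eq_monomial, mul_pow, mul_pow,
      eq_add_of_sub_eq' hr]
    ring
  have hnot : ¬ Finsupp.single t (q + 1) ≤ Finsupp.single s (2 * q + i) + Finsupp.single t q := by
    intro h
    simpa [Finsupp.single_apply, hst] using h t
  rw [hsplit, coeff_add, coeff_monomial_mul' _ _ _ (X s ^ q * r * g), if_neg hnot, add_zero,
    Finsupp.single_add, add_right_comm, coeff_monomial_mul, one_mul]

end MvPolynomial

theorem Finsupp.toLex_le_of_degree_eq_of_apply_one_le {e f : Fin 2 →₀ ℕ}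
    (hdeg : e.degree = f.degree) (h1 : f 1 ≤ e 1) : toLex e ≤ toLex f := by
  simp only [Finsupp.degree_eq_sum, Fin.sum_univ_two] at hdeg
  rcases (show e 0 ≤ f 0 by omega).lt_or_eq with h0 | h0
  · exact le_of_lt ⟨0, fun j hj => absurd hj (Fin.not_lt_zero j), h0⟩
  · have : e = f := by
      ext j
      fin_cases j
      · exact h0
      · simp only [Fin.mk_one]; omega
    rw [this]

theorem stmt8_general (Q Q' : MvPolynomial (Fin 2) (ZMod 2)) (d q i : ℕ)
    (hhom : Q.IsHomogeneous d)
    (hfac : Q = (X 0 * X 1 * (X 0 + X 1)) ^ q * Q')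
    (hi : MvPolynomial.coeff (Finsupp.single (0 : Fin 2) i) Q' ≠ 0) :
    (Finsupp.single (0 : Fin 2) (2 * q + i) + Finsupp.single (1 : Fin 2) q) ∈ Q.support ∧
      ∀ e ∈ Q.support, toLex e ≤
        toLex (Finsupp.single (0 : Fin 2) (2 * q + i) + Finsupp.single (1 : Fin 2) q) := by
  set T := Finsupp.single (0 : Fin 2) (2 * q + i) + Finsupp.single (1 : Fin 2) q
  have hT : T ∈ Q.support := by
    rw [mem_support_iff, hfac, coeff_X_mul_X_mul_X_add_X_pow_mul (by decide)]
    exact hi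
  have hdvd : monomial (Finsupp.single 1 q) 1 ∣ Q := by
    rw [← X_pow_eq_monomial, hfac]
    exact (pow_dvd_pow_of_dvd (dvd_mul_of_dvd_left (dvd_mul_left _ _) _) q).mul_right Q'
  refine ⟨hT, fun e he => Finsupp.toLex_le_of_degree_eq_of_apply_one_le ?_ ?_⟩
  · rw [Finsupp.degree_eq_weight_one]
    exact (hhom (mem_support_iff.mp he)).trans (hhom (mem_support_iff.mp hT)).symm
  · simpa [T] using le_of_monomial_one_dvd_of_mem_support hdvd he 1

/-- In `F₂[x₁,x₂]`: if a nonzero homogeneous polynomial `Q` of degree `d` is invariant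
under `x₂ ↦ x₁ + x₂`, and `Q = (x₁ x₂ (x₁+x₂))^q · Q'` with `q` maximal (i.e.
`x₁ x₂ (x₁+x₂) ∤ Q'`), and `Q'` contains the monomial `x₁^i`, then the lexicographically
largest monomial of `Q` is `x₁^(2q+i) x₂^q`. -/
theorem stmt8 (Q Q' : MvPolynomial (Fin 2) (ZMod 2)) (d q i : ℕ) (hQ0 : Q ≠ 0)
    (hhom : Q.IsHomogeneous d)
    (hinv : MvPolynomial.aeval ![X 0, X 0 + X 1] Q = Q)
    (hfac : Q = (X 0 * X 1 * (X 0 + X 1)) ^ q * Q')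
    (hqmax : ¬ ((X 0 * X 1 * (X 0 + X 1) : MvPolynomial (Fin 2) (ZMod 2)) ∣ Q'))
    (hi : MvPolynomial.coeff (Finsupp.single (0 : Fin 2) i) Q' ≠ 0) :
    (Finsupp.single (0 : Fin 2) (2 * q + i) + Finsupp.single (1 : Fin 2) q) ∈ Q.support ∧
      ∀ e ∈ Q.support, toLex e ≤
        toLex (Finsupp.single (0 : Fin 2) (2 * q + i) + Finsupp.single (1 : Fin 2) q) :=
  stmt8_general Q Q' d q i hhom hfac hi
end

section
/- If f ∈ F_2[x_1,...,x_n] is invariant under the Borel subgroup B_n of upper-triangular matrices in GL_n(F_2) and f is divisible by x_k, then f is divisible by V_k = Π_{(λ_1,...,λ_{k-1}) ∈ F_2^{k-1}} (λ_1 x_1 + ... + λ_{k-1} x_{k-1} + x_k). -/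
/-!
For every `λ ∈ F₂^{k-1}` the substitution `x_k ↦ λ₁x₁ + ⋯ + λ_{k-1}x_{k-1} + x_k` (fixing the other
variables) is given by an upper unitriangular matrix, so it fixes `f`. Applying it to `f = x_k g`
shows that the linear form `V(λ) = λ₁x₁ + ⋯ + x_k` divides `f`. Each `V(λ)` is prime, being the
image of the prime `x_k` under an automorphism of `F₂[x₁,…,x_n]`; the `V(λ)` are pairwise distinct
and `F₂[x₁,…,x_n]` has no units other than `1`, so their product `V_k` divides `f`.
-/

open MvPolynomial

theorem Fintype.prod_primes_dvd_of_injective {ι M₀ : Type*} [Fintype ι] [CommMonoidWithZero M₀]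
    [IsCancelMulZero M₀] [Subsingleton M₀ˣ] {p : ι → M₀} (hinj : Function.Injective p)
    (hprime : ∀ i, Prime (p i)) {n : M₀} (hdvd : ∀ i, p i ∣ n) : ∏ i, p i ∣ n := by
  classical
  have h := Finset.prod_primes_dvd (s := Finset.univ.image p) n
    (by simpa only [Finset.mem_image, Finset.mem_univ, true_and, forall_exists_index,
      forall_apply_eq_imp_iff])
    (by simpa only [Finset.mem_image, Finset.mem_univ, true_and, forall_exists_index,
      forall_apply_eq_imp_iff])
  rwa [Finset.prod_image fun i _ j _ h => hinj h] at h

namespace MvPolynomial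

variable {R σ : Type*} [CommRing R]

instance subsingleton_units_of_isReduced [IsReduced R] [Subsingleton Rˣ] :
    Subsingleton (MvPolynomial σ R)ˣ := by
  refine subsingleton_of_forall_eq 1 fun u => Units.ext ?_
  obtain ⟨r, hr, hu⟩ := isUnit_iff_eq_C_of_isReduced.1 u.isUnit
  rw [hu, show r = 1 from congrArg Units.val (Subsingleton.elim hr.unit 1), C_1, Units.val_one]

section Translation

variable [DecidableEq σ]

lemma aeval_update_X_of_mem_supported {i : σ} {p q : MvPolynomial σ R}
    (hq : q ∈ supported R {i}ᶜ) : aeval (Function.update X i p) q = q := by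
  refine AlgHom.eqOn_adjoin_iff (ψ := AlgHom.id R _).2 ?_ hq
  rintro _ ⟨j, hj, rfl⟩
  simp [Function.update_of_ne hj]

lemma aeval_update_X_add_comp {i : σ} {p q : MvPolynomial σ R} (hq : q ∈ supported R {i}ᶜ)
    (hpq : p + q = 0) :
    (aeval (Function.update X i (X i + p))).comp (aeval (Function.update X i (X i + q))) =
      AlgHom.id R _ := by
  ext j : 1
  obtain rfl | hj := eq_or_ne j i
  · rw [AlgHom.comp_apply, aeval_X, Function.update_self, map_add, aeval_X, Function.update_self,
      aeval_update_X_of_mem_supported hq, add_assoc, hpq, add_zero, AlgHom.id_apply]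
  · simp [Function.update_of_ne hj]

noncomputable def translateX (i : σ) {q : MvPolynomial σ R} (hq : q ∈ supported R {i}ᶜ) :
    MvPolynomial σ R ≃ₐ[R] MvPolynomial σ R :=
  AlgEquiv.ofAlgHom _ _ (aeval_update_X_add_comp (neg_mem hq) (add_neg_cancel q))
    (aeval_update_X_add_comp hq (neg_add_cancel q))

end Translation

lemma prime_X_add_of_mem_supported [IsDomain R] {i : σ} {q : MvPolynomial σ R}
    (hq : q ∈ supported R {i}ᶜ) : Prime (X i + q) := by
  classical
  have h := (MulEquiv.prime_iff (translateX i hq)).2 (X_prime (R := R) (i := i))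
  simpa [translateX] using h

section LinearForms

variable {ι : Type*} [Fintype ι] {e : ι → σ}

lemma sum_C_mul_X_mem_supported [Nontrivial R] (a : ι → R) :
    ∑ l, C (a l) * X (e l) ∈ supported R (Set.range e) :=
  Subalgebra.sum_mem _ fun l _ =>
    Subalgebra.mul_mem _ (Subalgebra.algebraMap_mem _ _) (X_mem_supported.2 ⟨l, rfl⟩)

lemma coeff_single_sum_C_mul_X_add_X (he : Function.Injective e) {i : σ}
    (hi : i ∉ Set.range e) (a : ι → R) (l : ι) :
    coeff (Finsupp.single (e l) 1) (∑ l', C (a l') * X (e l') + X i) = a l := by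
  classical
  have hil : i ≠ e l := fun h => hi ⟨l, h.symm⟩
  simp [coeff_sum, coeff_X, Finsupp.single_left_inj one_ne_zero, he.eq_iff, hil]

lemma sum_C_mul_X_add_X_injective (he : Function.Injective e) {i : σ} (hi : i ∉ Set.range e) :
    Function.Injective fun a : ι → R => ∑ l, C (a l) * X (e l) + X i := by
  intro a b hab
  funext l
  simpa [coeff_single_sum_C_mul_X_add_X he hi] using
      congrArg (coeff (Finsupp.single (e l) 1)) hab

lemma sum_C_extend_mul_X (he : Function.Injective e) [Fintype σ] (a : ι → R) :
    ∑ j, C (Function.extend e a 0 j) * X j = ∑ l, C (a l) * X (e l) :=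
  (Fintype.sum_of_injective e he _ _ (fun j hj => by simp [Function.extend_apply' _ _ _ hj])
    fun l => by rw [he.extend_apply]).symm

end LinearForms

end MvPolynomial

section Borel

variable {n : ℕ}

lemma matAct_one_add_col (k : Fin n) (b : Fin n → ZMod 2) (f : MvPolynomial (Fin n) (ZMod 2)) :
    matAct (1 + Matrix.of fun i j => if j = k then b i else 0) f =
      aeval (Function.update X k (X k + ∑ j, C (b j) * X j)) f := by
  unfold matAct
  congr 2
  funext i
  obtain rfl | hi := eq_or_ne i k
  · simp [add_mul, Finset.sum_add_distrib, Matrix.one_apply]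
  · simp [Matrix.one_apply, hi]

lemma X_add_sum_C_mul_X_dvd_of_borel_invariant {f : MvPolynomial (Fin n) (ZMod 2)}
    (hinv : ∀ σ : Matrix (Fin n) (Fin n) (ZMod 2),
      (∀ i j : Fin n, j < i → σ i j = 0) → (∀ i : Fin n, σ i i = 1) → matAct σ f = f)
    {k : Fin n} (hdvd : X k ∣ f) {b : Fin n → ZMod 2} (hb : ∀ i, k ≤ i → b i = 0) :
    X k + ∑ j, C (b j) * X j ∣ f := by
  obtain ⟨g, rfl⟩ := hdvd
  have hfix := hinv (1 + Matrix.of fun i j => if j = k then b i else 0)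
    (fun i j hji => by
      simpa [Matrix.one_apply, hji.ne'] using fun hjk : j = k => hb i (hjk ▸ hji.le))
    (fun i => by simpa using fun hik : i = k => hb i hik.ge)
  rw [matAct_one_add_col, map_mul, aeval_X, Function.update_self] at hfix
  exact hfix ▸ dvd_mul_right _ _

end Borel

/-- Mùi's observation: if `f ∈ F₂[x₁,…,x_n]` is invariant under the Borel subgroup `B_n`
of upper-triangular invertible matrices and `x_k ∣ f`, then
`V_k = Π_{(λ_1,…,λ_{k-1}) ∈ F₂^{k-1}} (λ_1 x_1 + ⋯ + λ_{k-1} x_{k-1} + x_k)` divides `f`. -/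
theorem stmt11 (n : ℕ) (f : MvPolynomial (Fin n) (ZMod 2))
    (hinv : ∀ σ : Matrix (Fin n) (Fin n) (ZMod 2),
      (∀ i j : Fin n, j < i → σ i j = 0) → (∀ i : Fin n, σ i i = 1) → matAct σ f = f)
    (k : Fin n) (hdvd : (X k : MvPolynomial (Fin n) (ZMod 2)) ∣ f) :
    (∏ a : Fin (k : ℕ) → ZMod 2,
      ((∑ j : Fin (k : ℕ), C (a j) * X (⟨(j : ℕ), j.2.trans k.2⟩ : Fin n)) + X k)) ∣ f := by
  have he : Function.Injective (Fin.castLE k.2.le) := Fin.castLE_injective _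
  have hk : k ∉ Set.range (Fin.castLE k.2.le) := by
    rintro ⟨j, hj⟩
    exact (Fin.ext_iff.1 hj ▸ j.2).false
  refine Fintype.prod_primes_dvd_of_injective (sum_C_mul_X_add_X_injective he hk)
    (fun a => by
      rw [add_comm]
      exact prime_X_add_of_mem_supported
        (supported_mono (Set.subset_compl_singleton_iff.2 hk) (sum_C_mul_X_mem_supported a)))
    fun a => ?_
  rw [← sum_C_extend_mul_X he, add_comm]
  refine X_add_sum_C_mul_X_dvd_of_borel_invariant hinv hdvd fun i hki => ?_
  exact Function.extend_apply' _ _ _ fun ⟨j, hj⟩ => (hj ▸ hki).not_gt j.2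
end

section
/- In F_2[x_1,x_2] with GL_2(F_2) acting by linear substitution, the image e_2 · (x_1 x_2 · F_2[x_1,x_2]) of the ideal generated by x_1 x_2 under the Steinberg idempotent e_2 = B̄_2 Σ̄_2 equals ω_2 · (e_2 · F_2[x_1,x_2]), where ω_2 = x_1 x_2 (x_1 + x_2). -/
open MvPolynomial

/-!
Write `e₂ = (1 + u)(1 + s)`. Since `s² = u² = 1` and `sus = usu`, `e₂` is idempotent in
characteristic 2, and since `s` and `u` fix `ω₂`, `e₂` commutes with multiplication by `ω₂`.
This gives `ω₂ e₂ g = e₂ (x₁x₂ · (x₁ + x₂) g)`. Conversely `g + s g` is divisible by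
`x₁ + x₂`, so `e₂ (x₁x₂ g) = (1 + u) (x₁x₂ (g + s g)) = ω₂ h` for some `h`, and then
`e₂ (x₁x₂ g) = e₂ (ω₂ h) = ω₂ e₂ h`.
-/

/-- The action of the Steinberg idempotent `e₂ = B̄₂ Σ̄₂ = 1 + s + u + us` on
`F₂[x₁,x₂]`, where `s` swaps the variables and `u` is `x₂ ↦ x₁ + x₂`. -/
noncomputable def steinbergAct (f : MvPolynomial (Fin 2) (ZMod 2)) :
    MvPolynomial (Fin 2) (ZMod 2) :=
  f + MvPolynomial.aeval ![X 1, X 0] f + MvPolynomial.aeval ![X 0, X 0 + X 1] f +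
    MvPolynomial.aeval ![X 0 + X 1, X 0] f

/- `((1 + t)(1 + s))² - (1 + t)(1 + s)` is a combination of the relations of `S₃ = ⟨s, t⟩`
and of `2 = 0`. -/
theorem isIdempotentElem_one_add_mul_one_add {R : Type*} [Ring R] (h2 : (2 : R) = 0) {s t : R}
    (hs : s * s = 1) (ht : t * t = 1) (hst : s * t * s = t * s * t) :
    IsIdempotentElem ((1 + t) * (1 + s)) := by
  have expand : (1 + t) * (1 + s) * ((1 + t) * (1 + s)) = (1 + t) * (1 + s) +
      (1 + t) * (s * s - 1) + (t * t - 1) * (1 + s + s * t) + (1 + t) * (s * t * s - t * s * t) +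
      2 * (1 + s + t + t * s + s * t + t * s * t) := by
    noncomm_ring
  rw [IsIdempotentElem, expand, hs, ht, hst, h2]
  simp

theorem MvPolynomial.sub_mem_of_forall_sub_X_mem {σ R S : Type*} [CommRing R] [CommRing S]
    [Algebra R S] {I : Ideal S} {φ ψ : MvPolynomial σ R →ₐ[R] S}
    (h : ∀ i, φ (X i) - ψ (X i) ∈ I) (f : MvPolynomial σ R) : φ f - ψ f ∈ I := by
  rw [← Ideal.Quotient.eq, ← Ideal.Quotient.mkₐ_eq_mk R, ← AlgHom.comp_apply, ← AlgHom.comp_apply]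
  congr 1
  exact algHom_ext fun i => by simpa [Ideal.Quotient.mkₐ_eq_mk, Ideal.Quotient.eq] using h i

local notation "R₂" => MvPolynomial (Fin 2) (ZMod 2)

local notation "ω₂" => (X 0 * X 1 * (X 0 + X 1) : R₂)

noncomputable def swapVars : R₂ →ₐ[ZMod 2] R₂ := aeval ![X 1, X 0]

noncomputable def transvection : R₂ →ₐ[ZMod 2] R₂ := aeval ![X 0, X 0 + X 1]

@[simp]
theorem swapVars_X_zero : swapVars (X 0) = X 1 := aeval_X _ _

@[simp]
theorem swapVars_X_one : swapVars (X 1) = X 0 := aeval_X _ _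

@[simp]
theorem transvection_X_zero : transvection (X 0) = X 0 := aeval_X _ _

@[simp]
theorem transvection_X_one : transvection (X 1) = X 0 + X 1 := aeval_X _ _

theorem swapVars_mul_swapVars : swapVars * swapVars = 1 :=
  algHom_ext fun i => by fin_cases i <;> simp

theorem transvection_mul_transvection : transvection * transvection = 1 :=
  algHom_ext fun i => by fin_cases i <;> simp [CharTwo.add_cancel_left]

theorem swapVars_mul_transvection_mul_swapVars :
    swapVars * transvection * swapVars = transvection * swapVars * transvection :=
  algHom_ext fun i => by
    fin_cases i
    · simp [add_comm]
    · simp only [Fin.mk_one, AlgHom.mul_apply, swapVars_X_one, transvection_X_zero, swapVars_X_zero,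
        transvection_X_one, map_add]
      rw [add_right_comm, CharTwo.add_self_eq_zero, zero_add]

theorem transvection_mul_swapVars : transvection * swapVars = aeval ![X 0 + X 1, X 0] :=
  algHom_ext fun i => by fin_cases i <;> simp

theorem steinbergAct_eq (f : R₂) :
    steinbergAct f = f + swapVars f + transvection (f + swapVars f) := by
  rw [steinbergAct, map_add, ← AlgHom.mul_apply, transvection_mul_swapVars, swapVars,
    transvection]
  ring

theorem steinbergAct_eq_toEnd (f : R₂) :
    steinbergAct f =
      ((1 + AlgHom.toEnd transvection) * (1 + AlgHom.toEnd swapVars) : Module.End (ZMod 2) R₂) f := by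
  simp only [steinbergAct_eq, map_add, mul_add, add_mul, mul_one, one_mul, LinearMap.add_apply,
    Module.End.one_apply, Module.End.mul_apply, AlgHom.toEnd_apply, AlgHom.toLinearMap_apply]
  abel

theorem steinbergAct_steinbergAct (f : R₂) : steinbergAct (steinbergAct f) = steinbergAct f := by
  have two_eq_zero : (2 : Module.End (ZMod 2) R₂) = 0 :=
    one_add_one_eq_two.symm.trans <| LinearMap.ext fun f => CharTwo.add_self_eq_zero f
  simp only [steinbergAct_eq_toEnd, ← Module.End.mul_apply]
  rw [(isIdempotentElem_one_add_mul_one_add two_eq_zero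
    (by rw [← map_mul, swapVars_mul_swapVars, map_one])
    (by rw [← map_mul, transvection_mul_transvection, map_one])
    (by simp only [← map_mul, swapVars_mul_transvection_mul_swapVars])).eq]

theorem swapVars_omega : swapVars ω₂ = ω₂ := by
  simp only [map_mul, map_add, swapVars_X_zero, swapVars_X_one]
  ring

theorem transvection_omega : transvection ω₂ = ω₂ := by
  simp only [map_mul, map_add, transvection_X_zero, transvection_X_one, CharTwo.add_cancel_left]
  ring

theorem steinbergAct_omega_mul (f : R₂) : steinbergAct (ω₂ * f) = ω₂ * steinbergAct f := by
  rw [steinbergAct_eq, steinbergAct_eq, map_mul swapVars, swapVars_omega, ← mul_add,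
    map_mul transvection, transvection_omega, ← mul_add]

theorem X_zero_add_X_one_dvd_add_swapVars (f : R₂) : X 0 + X 1 ∣ f + swapVars f := by
  have h : swapVars f - AlgHom.id (ZMod 2) R₂ f ∈ Ideal.span {X 0 + X 1} :=
    sub_mem_of_forall_sub_X_mem (fun i => Ideal.mem_span_singleton.2 <| by
      fin_cases i <;> simp [CharTwo.sub_eq_add, add_comm]) f
  rwa [Ideal.mem_span_singleton, AlgHom.id_apply, CharTwo.sub_eq_add, add_comm (swapVars f)] at h

theorem omega_dvd_steinbergAct_X_zero_mul_X_one_mul (g : R₂) :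
    ω₂ ∣ steinbergAct (X 0 * X 1 * g) := by
  obtain ⟨k, hk⟩ := X_zero_add_X_one_dvd_add_swapVars g
  have hX : swapVars (X 0 * X 1) = X 0 * X 1 := by
    rw [map_mul, swapVars_X_zero, swapVars_X_one, mul_comm]
  have hsym : X 0 * X 1 * g + swapVars (X 0 * X 1 * g) = ω₂ * k := by
    rw [map_mul, hX, ← mul_add, hk]
    ring
  refine ⟨k + transvection k, ?_⟩
  rw [steinbergAct_eq, hsym, map_mul, transvection_omega]
  exact (mul_add _ _ _).symm

/-- `e₂ · (x₁x₂ · F₂[x₁,x₂]) = ω₂ · (e₂ · F₂[x₁,x₂])` where `ω₂ = x₁x₂(x₁+x₂)`. -/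
theorem stmt17 :
    (Set.range fun g : MvPolynomial (Fin 2) (ZMod 2) => steinbergAct (X 0 * X 1 * g)) =
      Set.range fun g : MvPolynomial (Fin 2) (ZMod 2) =>
        (X 0 * X 1 * (X 0 + X 1)) * steinbergAct g := by
  ext f
  simp only [Set.mem_range]
  constructor
  · rintro ⟨g, rfl⟩
    obtain ⟨h, hh⟩ := omega_dvd_steinbergAct_X_zero_mul_X_one_mul g
    exact ⟨h, by rw [← steinbergAct_omega_mul, ← hh, steinbergAct_steinbergAct]⟩
  · rintro ⟨g, rfl⟩
    exact ⟨(X 0 + X 1) * g, by rw [← mul_assoc, steinbergAct_omega_mul]⟩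
end

section
/- In F_2[x_1,x_2], for positive integers a_1 > 2 a_2 > 0, the congruence x_1^{a_1} x_2^{a_2} ≡ Σ_{j=1}^{a_2} (C(a_2,j) + C(a_1 - a_2, j)) x_1^{a_2 + j} x_2^{a_1 - j} + Σ_{j=a_2+1}^{a_1 - a_2 - 1} C(a_1 - a_2, j) x_1^{a_2+j} x_2^{a_1-j} holds modulo the F_2-subspace L_2' spanned by all polynomials of the form [x_2^{a-2b} + (x_1+x_2)^{a-2b}] x_1^b x_2^b (x_1+x_2)^b with a ≥ 2b ≥ 0. -/
open MvPolynomial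

private lemma split_one (n : ℕ) (f : ℕ → MvPolynomial (Fin 2) (ZMod 2)) (h : 1 ≤ n) :
    ∑ j ∈ Finset.range (n+1), f j = f 0 + ∑ j ∈ Finset.Icc 1 n, f j := by
  rw [Finset.range_eq_Ico, ← Finset.sum_Ico_consecutive f (Nat.zero_le 1) (by omega),
    ← Finset.range_eq_Ico, Finset.sum_range_one, Finset.Ico_add_one_right_eq_Icc]

private lemma split_four (a k : ℕ) (f : ℕ → MvPolynomial (Fin 2) (ZMod 2)) (h : 1 ≤ a) :
    ∑ j ∈ Finset.range (a+1+k+1), f j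
    = f 0 + ∑ j ∈ Finset.Icc 1 a, f j + ∑ j ∈ Finset.Icc (a+1) (a+k), f j + f (a+1+k) := by
  rw [Finset.sum_range_succ, show a+1+k = a+k+1 from by omega, Finset.range_eq_Ico,
    ← Finset.sum_Ico_consecutive f (Nat.zero_le 1) (by omega),
    ← Finset.sum_Ico_consecutive (fun j => f j) (show (1:ℕ) ≤ a+1 from by omega) (by omega),
    ← Finset.range_eq_Ico, Finset.sum_range_one, Finset.Ico_add_one_right_eq_Icc, Finset.Ico_add_one_right_eq_Icc]
  abel

private lemma binom_expand (n : ℕ) :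
    ((X 0 + X 1 : MvPolynomial (Fin 2) (ZMod 2))) ^ n
    = ∑ j ∈ Finset.range (n+1),
        C ((n.choose j : ZMod 2)) * ((X 0 : MvPolynomial (Fin 2) (ZMod 2))^j * X 1^(n-j)) := by
  rw [add_pow]
  refine Finset.sum_congr rfl fun j hj => ?_
  rw [map_natCast (C : ZMod 2 →+* MvPolynomial (Fin 2) (ZMod 2))]
  ring

/-- In `F₂[x₁,x₂]`, for `a₁ > 2a₂ > 0`, one has the congruence
`x₁^{a₁} x₂^{a₂} ≡ Σ_{j=1}^{a₂} (C(a₂,j)+C(a₁-a₂,j)) x₁^{a₂+j} x₂^{a₁-j}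
  + Σ_{j=a₂+1}^{a₁-a₂-1} C(a₁-a₂,j) x₁^{a₂+j} x₂^{a₁-j}`
modulo the `F₂`-span of the polynomials
`(x₂^{a-2b} + (x₁+x₂)^{a-2b}) x₁^b x₂^b (x₁+x₂)^b`, `a ≥ 2b ≥ 0`
(congruence expressed as: the sum of the two sides lies in the span, char 2). -/
theorem stmt18 (a₁ a₂ : ℕ) (h2 : 0 < a₂) (h1 : 2 * a₂ < a₁) :
    (X 0 ^ a₁ * X 1 ^ a₂ +
        ((∑ j ∈ Finset.Icc 1 a₂,
            C ((Nat.choose a₂ j : ZMod 2) + (Nat.choose (a₁ - a₂) j : ZMod 2)) *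
              (X 0 ^ (a₂ + j) * X 1 ^ (a₁ - j))) +
          ∑ j ∈ Finset.Icc (a₂ + 1) (a₁ - a₂ - 1),
            C ((Nat.choose (a₁ - a₂) j : ZMod 2)) *
              (X 0 ^ (a₂ + j) * X 1 ^ (a₁ - j))) : MvPolynomial (Fin 2) (ZMod 2)) ∈
      Submodule.span (ZMod 2)
        {p : MvPolynomial (Fin 2) (ZMod 2) | ∃ a b : ℕ, 2 * b ≤ a ∧
          p = (X 1 ^ (a - 2 * b) + (X 0 + X 1) ^ (a - 2 * b)) *
            (X 0 ^ b * X 1 ^ b * (X 0 + X 1) ^ b)} := by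
  refine Submodule.subset_span ⟨a₁, a₂, by omega, ?_⟩
  obtain ⟨k, rfl⟩ : ∃ k, a₁ = 2*a₂+1+k := ⟨a₁ - (2*a₂+1), by omega⟩
  set a₁ : ℕ := 2*a₂+1+k with ha₁
  have hm : a₁ - a₂ = a₂+1+k := by omega
  have hm1 : a₁ - a₂ - 1 = a₂ + k := by omega
  have hn : a₁ - 2*a₂ = k + 1 := by omega
  rw [hm, show a₂+1+k-1 = a₂+k from by omega, hn]
  set g : ℕ → MvPolynomial (Fin 2) (ZMod 2) :=
    fun j => C ((a₂.choose j : ZMod 2)) * (X 0^(a₂+j) * X 1^(a₁-j)) with hg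
  set h : ℕ → MvPolynomial (Fin 2) (ZMod 2) :=
    fun j => C (((a₂+1+k).choose j : ZMod 2)) * (X 0^(a₂+j) * X 1^(a₁-j)) with hh
  have rhs_eq : ((X 1^(k+1) + (X 0+X 1)^(k+1)) * (X 0^a₂ * X 1^a₂ * (X 0+X 1)^a₂)
        : MvPolynomial (Fin 2) (ZMod 2))
      = (∑ j ∈ Finset.range (a₂+1), g j) + (∑ j ∈ Finset.range (a₂+1+k+1), h j) := by
    have step1 : ((X 1^(k+1) + (X 0+X 1)^(k+1)) * (X 0^a₂ * X 1^a₂ * (X 0+X 1)^a₂)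
          : MvPolynomial (Fin 2) (ZMod 2))
        = X 1^(k+1) * (X 0^a₂ * X 1^a₂ * (X 0+X 1)^a₂) + X 0^a₂ * X 1^a₂ * (X 0+X 1)^(a₂+1+k) := by
      ring
    rw [step1]
    congr 1
    · rw [binom_expand a₂]
      simp only [Finset.mul_sum]
      refine Finset.sum_congr rfl fun j hj => ?_
      simp only [Finset.mem_range] at hj
      obtain ⟨d, hd⟩ : ∃ d, a₂ = j + d := ⟨a₂ - j, by omega⟩
      rw [hg]
      simp only
      rw [show a₂ - j = d from by omega, show a₁ - j = k+1+d+d+j from by omega, hd]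
      ring
    · rw [binom_expand (a₂+1+k)]
      simp only [Finset.mul_sum]
      refine Finset.sum_congr rfl fun j hj => ?_
      simp only [Finset.mem_range] at hj
      rw [hh]
      simp only
      rw [show a₁ - j = a₂ + (a₂+1+k-j) from by omega]
      ring
  rw [rhs_eq, split_one a₂ g h2, split_four a₂ k h h2]
  have cancel : g 0 + h 0 = 0 := by
    rw [hg, hh]
    simp only [Nat.choose_zero_right, Nat.cast_one, map_one, one_mul, Nat.add_zero,
      Nat.sub_zero]
    exact CharTwo.add_self_eq_zero _
  have top : h (a₂+1+k) = X 0 ^ a₁ * X 1 ^ a₂ := by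
    rw [hh]
    simp only [Nat.choose_self, Nat.cast_one, map_one, one_mul]
    rw [show a₂ + (a₂+1+k) = a₁ from by omega, show a₁ - (a₂+1+k) = a₂ from by omega]
  have coefsplit : ∑ j ∈ Finset.Icc 1 a₂,
      C ((Nat.choose a₂ j : ZMod 2) + (Nat.choose (a₂+1+k) j : ZMod 2)) *
        (X 0 ^ (a₂ + j) * X 1 ^ (a₁ - j))
      = (∑ j ∈ Finset.Icc 1 a₂, g j) + ∑ j ∈ Finset.Icc 1 a₂, h j := by
    rw [← Finset.sum_add_distrib]
    refine Finset.sum_congr rfl fun j hj => ?_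
    rw [hg, hh]
    simp only
    rw [map_add, add_mul]
  rw [coefsplit]
  have : ∑ j ∈ Finset.Icc (a₂+1) (a₂+k),
      C ((Nat.choose (a₂+1+k) j : ZMod 2)) * (X 0 ^ (a₂ + j) * X 1 ^ (a₁ - j))
      = ∑ j ∈ Finset.Icc (a₂+1) (a₂+k), h j := rfl
  rw [this]
  calc X 0 ^ a₁ * X 1 ^ a₂ +
        ((∑ j ∈ Finset.Icc 1 a₂, g j) + ∑ j ∈ Finset.Icc 1 a₂, h j
          + ∑ j ∈ Finset.Icc (a₂+1) (a₂+k), h j)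
      = (g 0 + h 0) + ((∑ j ∈ Finset.Icc 1 a₂, g j) + ∑ j ∈ Finset.Icc 1 a₂, h j
          + ∑ j ∈ Finset.Icc (a₂+1) (a₂+k), h j) + h (a₂+1+k) := by
        rw [cancel, top]; abel
    _ = g 0 + ∑ j ∈ Finset.Icc 1 a₂, g j
        + (h 0 + ∑ j ∈ Finset.Icc 1 a₂, h j + ∑ j ∈ Finset.Icc (a₂+1) (a₂+k), h j
          + h (a₂+1+k)) := by abel
end
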